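/- Let X be a topological space, let φ : X → X be continuous, and let T_φ be the composition operator on C_b(X, ℂ). If the spectrum σ(T_φ) is a proper subset of the unit circle 𝕋 (i.e., σ(T_φ) ⊆ 𝕋 and σ(T_φ) ≠ 𝕋), then there exists N ≥ 1 such that T_φ^N is the identity operator; if moreover X is completely Hausdorff, then φ^N is the identity map on X. -/

import Mathlib

open BoundedContinuousFunction Filter
open scoped ENNReal

/-- The composition (Koopman) operator `f ↦ f ∘ φ` on `C_b(X, ℂ)`. -/
noncomputable def cbKoopman {X : Type*} [TopologicalSpace X] (φ : X → X) (hφ : Continuous φ) :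
    (X →ᵇ ℂ) →L[ℂ] (X →ᵇ ℂ) :=
  LinearMap.mkContinuous
    { toFun := fun f => f.compContinuous ⟨φ, hφ⟩
      map_add' := fun f g => by ext x; simp
      map_smul' := fun c f => by ext x; simp }
    1 (fun f => by simpa using f.norm_compContinuous_le ⟨φ, hφ⟩)

/-!
Since `0 ∉ σ(T_φ)`, the operator `T_φ` is invertible, so pulling functionals on `C_b(X, ℂ)` back
along `T_φ` is injective; it sends the evaluation at `x` to the evaluation at `φ x`.
Fix `c ∈ 𝕋 \ σ(T_φ)`. If the evaluations at `x, φ x, …, φ^[m-1] x` are pairwise distinct, some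
`g` with `‖g‖ ≤ 1` takes the value `c ^ (i + 1)` at `φ^[i] x`, and telescoping
`∑ c⁻¹ ^ (i + 1) * ((c - T_φ) h) (φ^[i] x)` for `h = (c - T_φ)⁻¹ g` gives `m ≤ 2 ‖(c - T_φ)⁻¹‖`.
So every evaluation is a periodic point of the injective pullback, with period at most
`M = ⌊2 ‖(c - T_φ)⁻¹‖⌋`, and `N = M!` works for all points at once.
-/

open Function Set

namespace Function

variable {α : Type*} {f : α → α} {x : α}

theorem Injective.injective_iterate_of_notMem_periodicPts (hf : Injective f)
    (hx : x ∉ periodicPts f) : Injective (f^[·] x) := by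
  intro m n heq
  by_contra hne
  rcases lt_or_gt_of_ne hne with hlt | hlt
  · exact hx (mk_mem_periodicPts (by lia) (iterate_cancel hf heq.symm))
  · exact hx (mk_mem_periodicPts (by lia) (iterate_cancel hf heq))

theorem Injective.isPeriodicPt_factorial_of_injOn_iterate_imp_le (hf : Injective f) {M : ℕ}
    (hM : ∀ m, (Iio m).InjOn (f^[·] x) → m ≤ M) : IsPeriodicPt f M.factorial x := by
  have hx : x ∈ periodicPts f := by
    by_contra hx
    have := hM (M + 1) ((hf.injective_iterate_of_notMem_periodicPts hx).injOn)
    lia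
  exact isPeriodicPt_iff_minimalPeriod_dvd.mpr <| Nat.dvd_factorial
    (minimalPeriod_pos_of_mem_periodicPts hx) (hM _ iterate_injOn_Iio_minimalPeriod)

end Function

namespace BoundedContinuousFunction

variable {X : Type*} [TopologicalSpace X]

section Interpolation

variable {𝕜 : Type*} [NormedField 𝕜]

theorem exists_apply_eq_one_apply_eq_zero {x y : X}
    (h : (fun f : X →ᵇ 𝕜 => f x) ≠ fun f => f y) :
    ∃ f : X →ᵇ 𝕜, f x = 1 ∧ f y = 0 := by
  obtain ⟨f, hf⟩ : ∃ f : X →ᵇ 𝕜, f x ≠ f y := by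
    contrapose! h
    exact funext h
  refine ⟨(f x - f y)⁻¹ • (f - const X (f y)), ?_, by simp⟩
  simp [inv_mul_cancel₀ (sub_ne_zero.mpr hf)]

variable {ι : Type*} {s : Finset ι} {y : ι → X}

theorem exists_apply_eq_one_apply_eq_zero_of_injOn
    (hy : (s : Set ι).InjOn (fun i (f : X →ᵇ 𝕜) => f (y i))) {i : ι} (hi : i ∈ s) :
    ∃ u : X →ᵇ 𝕜, u (y i) = 1 ∧ ∀ j ∈ s, j ≠ i → u (y j) = 0 := by
  classical
  have hsep : ∀ j ∈ s.erase i, ∃ f : X →ᵇ 𝕜, f (y i) = 1 ∧ f (y j) = 0 := fun j hj =>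
    exists_apply_eq_one_apply_eq_zero fun h =>
      (Finset.ne_of_mem_erase hj) (hy (Finset.mem_of_mem_erase hj) hi h.symm)
  choose! F hF using hsep
  refine ⟨∏ j ∈ s.erase i, F j, ?_, fun j hj hji => ?_⟩
  · rw [prod_apply]
    exact Finset.prod_eq_one fun j hj => (hF j hj).1
  · rw [prod_apply]
    have hj' : j ∈ s.erase i := Finset.mem_erase.mpr ⟨hji, hj⟩
    exact Finset.prod_eq_zero hj' (hF j hj').2

theorem exists_apply_eq_of_injOn (hy : (s : Set ι).InjOn (fun i (f : X →ᵇ 𝕜) => f (y i)))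
    (v : ι → 𝕜) : ∃ g : X →ᵇ 𝕜, ∀ i ∈ s, g (y i) = v i := by
  choose! u hu using fun i (hi : i ∈ s) => exists_apply_eq_one_apply_eq_zero_of_injOn hy hi
  refine ⟨∑ i ∈ s, v i • u i, fun k hk => ?_⟩
  rw [sum_apply, Finset.sum_eq_single_of_mem k hk fun j hj hjk => by
    simp [(hu j hj).2 k hk (Ne.symm hjk)]]
  simp [(hu k hk).1]

end Interpolation

section Truncation

variable {𝕜 : Type*} [RCLike 𝕜]

theorem exists_norm_le_one_apply_eq (g : X →ᵇ 𝕜) :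
    ∃ g' : X →ᵇ 𝕜, ‖g'‖ ≤ 1 ∧ ∀ z, ‖g z‖ ≤ 1 → g' z = g z := by
  have hmax : ∀ z, (0 : ℝ) < max 1 ‖g z‖ := fun z => by positivity
  have hcont : Continuous fun z => g z / ((max 1 ‖g z‖ : ℝ) : 𝕜) :=
    g.continuous.div (RCLike.continuous_ofReal.comp (continuous_const.max g.continuous.norm))
      fun z => RCLike.ofReal_ne_zero.mpr (hmax z).ne'
  have hbound : ∀ z, ‖g z / ((max 1 ‖g z‖ : ℝ) : 𝕜)‖ ≤ 1 := fun z => by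
    rw [norm_div, RCLike.norm_ofReal, abs_of_pos (hmax z), div_le_one (hmax z)]
    exact le_max_right _ _
  refine ⟨ofNormedAddCommGroup _ hcont 1 hbound,
    norm_ofNormedAddCommGroup_le _ zero_le_one _, fun z hz => ?_⟩
  simp [max_eq_left hz]

variable {ι : Type*} {s : Finset ι} {y : ι → X}

theorem exists_norm_le_one_apply_eq_of_injOn
    (hy : (s : Set ι).InjOn (fun i (f : X →ᵇ 𝕜) => f (y i))) {v : ι → 𝕜}
    (hv : ∀ i ∈ s, ‖v i‖ ≤ 1) : ∃ g : X →ᵇ 𝕜, ‖g‖ ≤ 1 ∧ ∀ i ∈ s, g (y i) = v i := by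
  obtain ⟨g, hg⟩ := exists_apply_eq_of_injOn hy v
  obtain ⟨g', hg'_norm, hg'⟩ := exists_norm_le_one_apply_eq g
  exact ⟨g', hg'_norm, fun i hi => by rw [hg' _ (hg i hi ▸ hv i hi), hg i hi]⟩

end Truncation

theorem injective_eval_of_forall_ne_exists_continuous
    (hsep : ∀ x y : X, x ≠ y →
      ∃ f : X → ℝ, Continuous f ∧ (∀ z, f z ∈ Icc (0 : ℝ) 1) ∧ f x = 1 ∧ f y = 0) :
    Injective fun x (f : X →ᵇ ℂ) => f x := by
  intro x y hxy
  by_contra hne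
  obtain ⟨f, hf, hf01, hfx, hfy⟩ := hsep x y hne
  have hbound : ∀ z, ‖(f z : ℂ)‖ ≤ 1 := fun z => by
    rw [Complex.norm_real, Real.norm_of_nonneg (hf01 z).1]
    exact (hf01 z).2
  have := congr_fun hxy (ofNormedAddCommGroup _ (Complex.continuous_ofReal.comp hf) 1 hbound)
  simp [hfx, hfy] at this

end BoundedContinuousFunction

section Koopman

variable {X : Type*} [TopologicalSpace X] {φ : X → X} {hφ : Continuous φ}

theorem cbKoopman_apply (f : X →ᵇ ℂ) (x : X) : cbKoopman φ hφ f x = f (φ x) := rfl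

theorem cbKoopman_pow_apply (n : ℕ) (f : X →ᵇ ℂ) (x : X) :
    (cbKoopman φ hφ ^ n) f x = f (φ^[n] x) := by
  induction n generalizing f with
  | zero => rfl
  | succ n ih =>
    rw [pow_succ, mul_apply_eq_comp, ih, cbKoopman_apply, iterate_succ_apply']

theorem algebraMap_sub_cbKoopman_apply (c : ℂ) (h : X →ᵇ ℂ) (y : X) :
    ((algebraMap ℂ _ c - cbKoopman φ hφ) h) y = c * h y - h (φ y) := by
  simp [cbKoopman_apply]

theorem sum_inv_pow_mul_algebraMap_sub_cbKoopman_apply {c : ℂ} (hc : c ≠ 0) (h : X →ᵇ ℂ)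
    (x : X) (n : ℕ) :
    ∑ i ∈ Finset.range n, c⁻¹ ^ (i + 1) * ((algebraMap ℂ _ c - cbKoopman φ hφ) h) (φ^[i] x) =
      h x - c⁻¹ ^ n * h (φ^[n] x) := by
  have hterm : ∀ i, c⁻¹ ^ (i + 1) * ((algebraMap ℂ _ c - cbKoopman φ hφ) h) (φ^[i] x) =
      c⁻¹ ^ i * h (φ^[i] x) - c⁻¹ ^ (i + 1) * h (φ^[i + 1] x) := fun i => by
    rw [algebraMap_sub_cbKoopman_apply, iterate_succ_apply']
    linear_combination c⁻¹ ^ i * h (φ^[i] x) * inv_mul_cancel₀ hc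
  simp_rw [hterm]
  rw [Finset.sum_range_sub']
  simp

theorem natCast_le_two_mul_norm_resolvent_of_injOn_iterate {c : ℂ} (hc : ‖c‖ = 1)
    (hres : c ∉ spectrum ℂ (cbKoopman φ hφ)) {x : X} {m : ℕ}
    (hm : (Iio m).InjOn fun n (f : X →ᵇ ℂ) => f (φ^[n] x)) :
    (m : ℝ) ≤ 2 * ‖resolvent (cbKoopman φ hφ) c‖ := by
  have hc0 : c ≠ 0 := norm_ne_zero_iff.mp (hc ▸ one_ne_zero)
  obtain ⟨g, hg_norm, hg⟩ := exists_norm_le_one_apply_eq_of_injOn (s := Finset.range m)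
    (by simpa using hm) (v := fun i => c ^ (i + 1)) (by simp [hc])
  set h := resolvent (cbKoopman φ hφ) c g
  have hgh : (algebraMap ℂ _ c - cbKoopman φ hφ) h = g := by
    rw [← mul_apply_eq_comp, resolvent,
      Ring.mul_inverse_cancel _ (spectrum.notMem_iff.mp hres), one_apply_eq_self]
  have hsum := sum_inv_pow_mul_algebraMap_sub_cbKoopman_apply (hφ := hφ) hc0 h x m
  rw [hgh, Finset.sum_congr rfl fun i hi => by rw [hg i hi, ← mul_pow, inv_mul_cancel₀ hc0,
    one_pow], Finset.sum_const, Finset.card_range, nsmul_one] at hsum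
  calc (m : ℝ) = ‖h x - c⁻¹ ^ m * h (φ^[m] x)‖ := by rw [← hsum, Complex.norm_natCast]
    _ ≤ ‖h‖ + ‖h‖ := by
      refine (norm_sub_le _ _).trans (add_le_add (norm_coe_le_norm h x) ?_)
      simpa [norm_inv, hc] using norm_coe_le_norm h _
    _ ≤ 2 * ‖resolvent (cbKoopman φ hφ) c‖ := by
      linarith [(resolvent (cbKoopman φ hφ) c).le_of_opNorm_le_of_le le_rfl hg_norm]

end Koopman

/-- If the spectrum of the composition operator `T_φ` on `C_b(X, ℂ)` is a proper subset of
the unit circle, then some power `T_φ^N` (`N ≥ 1`) is the identity; if moreover `X` is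
completely Hausdorff, then `φ^[N]` is the identity map. -/
theorem cb_periodic_of_spectrum_proper_subset_circle
    {X : Type*} [TopologicalSpace X] (φ : X → X) (hφ : Continuous φ)
    (hsub : spectrum ℂ (cbKoopman φ hφ) ⊆ {z : ℂ | ‖z‖ = 1})
    (hne : spectrum ℂ (cbKoopman φ hφ) ≠ {z : ℂ | ‖z‖ = 1}) :
    ∃ N ≥ 1, (cbKoopman φ hφ) ^ N = 1 ∧
      ((∀ x y : X, x ≠ y →
          ∃ f : X → ℝ, Continuous f ∧ (∀ z, f z ∈ Set.Icc (0 : ℝ) 1) ∧ f x = 1 ∧ f y = 0) →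
        φ^[N] = id) := by
  obtain ⟨c, hc, hc_res⟩ := exists_of_ssubset (hsub.ssubset_of_ne hne)
  set T := cbKoopman φ hφ
  have hT : Surjective T := by
    have hunit : IsUnit T := (spectrum.zero_notMem_iff ℂ).mp fun h => by simpa using hsub h
    exact fun f => ⟨(↑hunit.unit⁻¹ : (X →ᵇ ℂ) →L[ℂ] (X →ᵇ ℂ)) f, by
      rw [← mul_apply_eq_comp, hunit.mul_val_inv, one_apply_eq_self]⟩
  set N := (⌊2 * ‖resolvent T c‖⌋₊).factorial
  have horbit : ∀ x, (fun n (f : X →ᵇ ℂ) => f (φ^[n] x)) = fun n => (· ∘ T)^[n] fun f => f x :=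
    fun x => funext fun n => Semiconj.iterate_right (f := fun x (f : X →ᵇ ℂ) => f x)
      (gb := (· ∘ T)) (fun _ => rfl) n x
  have hper : ∀ x, (fun f : X →ᵇ ℂ => f (φ^[N] x)) = fun f => f x := fun x => by
    rw [congr_fun (horbit x) N]
    exact hT.injective_comp_right.isPeriodicPt_factorial_of_injOn_iterate_imp_le fun m hm =>
      Nat.le_floor <|
        natCast_le_two_mul_norm_resolvent_of_injOn_iterate hc hc_res (by rwa [horbit x])
  refine ⟨N, Nat.factorial_pos _, ?_, fun hsep => ?_⟩
  · ext f x
    rw [cbKoopman_pow_apply]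
    exact congr_fun (hper x) f
  · funext x
    exact injective_eval_of_forall_ne_exists_continuous hsep (hper x)
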